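/- If rank O(A,[C_i;C_j]) = rank O(A,C_i), then the row space of O(A,C_j) is contained in the row space of O(A,C_i); consequently, for any additional output C_k, rank O(A,[C_i;C_k]) = rank O(A,[C_i;C_j;C_k]). -/

import Mathlib

/-- The observability matrix `O(A, C) = [C; CA; …; CA^{n−1}]` of the pair `(A, C)`,
with the rows of `C A^k` stacked for `k = 0, …, n−1`. -/
noncomputable def obsMat {n : ℕ} {m : Type*} (A : Matrix (Fin n) (Fin n) ℝ)
    (C : Matrix m (Fin n) ℝ) : Matrix (Fin n × m) (Fin n) ℝ :=
  Matrix.of fun p j => (C * A ^ (p.1 : ℕ)) p.2 j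

open Matrix Module Submodule

theorem Submodule.le_of_finrank_sup_eq {K V : Type*} [DivisionRing K] [AddCommGroup V]
    [Module K V] {S T : Submodule K V} [FiniteDimensional K ↥(S ⊔ T)]
    (h : finrank K ↥(S ⊔ T) = finrank K S) : T ≤ S :=
  le_sup_right.trans (eq_of_le_of_finrank_le le_sup_left h.le).ge

section Observability

variable {n : ℕ} (A : Matrix (Fin n) (Fin n) ℝ)

noncomputable def obsRowSpace {m : Type*} (C : Matrix m (Fin n) ℝ) : Submodule ℝ (Fin n → ℝ) :=
  span ℝ (Set.range (obsMat A C))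

theorem rank_obsMat {m : Type*} [Fintype m] (C : Matrix m (Fin n) ℝ) :
    (obsMat A C).rank = finrank ℝ (obsRowSpace A C) :=
  rank_eq_finrank_span_row _

variable {m₁ m₂ : Type*} (B : Matrix m₁ (Fin n) ℝ) (C : Matrix m₂ (Fin n) ℝ)

@[simp]
theorem obsMat_fromRows_inl (k : Fin n) (i : m₁) :
    obsMat A (fromRows B C) (k, .inl i) = obsMat A B (k, i) := by
  ext j
  simp [obsMat, fromRows_mul]

@[simp]
theorem obsMat_fromRows_inr (k : Fin n) (i : m₂) :
    obsMat A (fromRows B C) (k, .inr i) = obsMat A C (k, i) := by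
  ext j
  simp [obsMat, fromRows_mul]

theorem range_obsMat_fromRows :
    Set.range (obsMat A (fromRows B C)) = Set.range (obsMat A B) ∪ Set.range (obsMat A C) := by
  ext x
  constructor
  · rintro ⟨⟨k, i | i⟩, rfl⟩
    exacts [.inl ⟨(k, i), (obsMat_fromRows_inl ..).symm⟩, .inr ⟨(k, i), (obsMat_fromRows_inr ..).symm⟩]
  · rintro (⟨⟨k, i⟩, rfl⟩ | ⟨⟨k, i⟩, rfl⟩)
    exacts [⟨(k, .inl i), obsMat_fromRows_inl ..⟩, ⟨(k, .inr i), obsMat_fromRows_inr ..⟩]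

theorem obsRowSpace_fromRows :
    obsRowSpace A (fromRows B C) = obsRowSpace A B ⊔ obsRowSpace A C := by
  rw [obsRowSpace, range_obsMat_fromRows, span_union]
  rfl

end Observability

/-- If `rank O(A,[C_i;C_j]) = rank O(A,C_i)`, then the row space of `O(A,C_j)` is
contained in that of `O(A,C_i)`; consequently, for any further output `C_k`,
`rank O(A,[C_i;C_k]) = rank O(A,[C_i;C_j;C_k])`. -/
theorem rowspace_containment {n : ℕ} (A : Matrix (Fin n) (Fin n) ℝ)
    (Ci Cj Ck : Matrix (Fin 1) (Fin n) ℝ)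
    (h : (obsMat A (Matrix.fromRows Ci Cj)).rank = (obsMat A Ci).rank) :
    Submodule.span ℝ (Set.range (obsMat A Cj)) ≤
        Submodule.span ℝ (Set.range (obsMat A Ci)) ∧
      (obsMat A (Matrix.fromRows Ci Ck)).rank =
        (obsMat A (Matrix.fromRows Ci (Matrix.fromRows Cj Ck))).rank := by
  rw [rank_obsMat, rank_obsMat, obsRowSpace_fromRows] at h
  have hji : obsRowSpace A Cj ≤ obsRowSpace A Ci := le_of_finrank_sup_eq h
  refine ⟨hji, ?_⟩
  rw [rank_obsMat, rank_obsMat, obsRowSpace_fromRows, obsRowSpace_fromRows, obsRowSpace_fromRows,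
    ← sup_assoc, sup_eq_left.mpr hji]
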